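/- Softmax is 1-Lipschitz in ℓ1 with respect to ℓ∞ logit perturbations up to a factor 2: if z, ẑ ∈ ℝ^S are logit vectors with ‖z − ẑ‖∞ ≤ δ, then Σ_i |softmax(z)_i − softmax(ẑ)_i| ≤ 2(e^{2δ} − 1). -/

import Mathlib

/-- Softmax ℓ1 stability under ℓ∞ logit perturbations: if `|z_i − ẑ_i| ≤ δ` for all
`i`, then `Σ_i |softmax(z)_i − softmax(ẑ)_i| ≤ 2(e^{2δ} − 1)`. -/
theorem softmax_l1_stability
    {S : ℕ} (hS : 0 < S) (z zhat : Fin S → ℝ) (δ : ℝ)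
    (h : ∀ i, |z i - zhat i| ≤ δ) :
    (∑ i, |Real.exp (z i) / (∑ j, Real.exp (z j)) -
        Real.exp (zhat i) / (∑ j, Real.exp (zhat j))|) ≤
      2 * (Real.exp (2 * δ) - 1) := by
  have i0 : Fin S := ⟨0, hS⟩
  have hδ : 0 ≤ δ := le_trans (abs_nonneg _) (h i0)
  set Z := ∑ j, Real.exp (z j) with hZdef
  set W := ∑ j, Real.exp (zhat j) with hWdef
  have hZpos : 0 < Z := Finset.sum_pos (fun j _ => Real.exp_pos _) ⟨i0, Finset.mem_univ _⟩
  have hWpos : 0 < W := Finset.sum_pos (fun j _ => Real.exp_pos _) ⟨i0, Finset.mem_univ _⟩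
  set p : Fin S → ℝ := fun i => Real.exp (z i) / Z with hp
  set q : Fin S → ℝ := fun i => Real.exp (zhat i) / W with hq
  have hpnn : ∀ i, 0 ≤ p i := fun i => div_nonneg (Real.exp_pos _).le hZpos.le
  have hqnn : ∀ i, 0 ≤ q i := fun i => div_nonneg (Real.exp_pos _).le hWpos.le
  have hsum_p : ∑ i, p i = 1 := by
    rw [← Finset.sum_div]; exact div_self hZpos.ne'
  have hsum_q : ∑ i, q i = 1 := by
    rw [← Finset.sum_div]; exact div_self hWpos.ne'
  have key : ∀ (x y : Fin S → ℝ), (∀ i, |x i - y i| ≤ δ) →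
      ∀ i, Real.exp (x i) / (∑ j, Real.exp (x j)) ≤
        Real.exp (2 * δ) * (Real.exp (y i) / (∑ j, Real.exp (y j))) := by
    intro x y hxy i
    have hXpos : (0:ℝ) < ∑ j, Real.exp (x j) :=
      Finset.sum_pos (fun j _ => Real.exp_pos _) ⟨i0, Finset.mem_univ _⟩
    have hYpos : (0:ℝ) < ∑ j, Real.exp (y j) :=
      Finset.sum_pos (fun j _ => Real.exp_pos _) ⟨i0, Finset.mem_univ _⟩
    have h1 : Real.exp (x i) ≤ Real.exp δ * Real.exp (y i) := by
      rw [← Real.exp_add]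
      exact Real.exp_le_exp.2 (by linarith [(abs_le.1 (hxy i)).2])
    have h2 : (∑ j, Real.exp (y j)) ≤ Real.exp δ * ∑ j, Real.exp (x j) := by
      rw [Finset.mul_sum]
      refine Finset.sum_le_sum fun j _ => ?_
      rw [← Real.exp_add]
      exact Real.exp_le_exp.2 (by linarith [(abs_le.1 (hxy j)).1])
    have hed : 0 < Real.exp δ := Real.exp_pos _
    rw [div_le_iff₀ hXpos]
    have : Real.exp (2*δ) * (Real.exp (y i) / ∑ j, Real.exp (y j)) * ∑ j, Real.exp (x j)
        = Real.exp (2*δ) * Real.exp (y i) * ((∑ j, Real.exp (x j)) / ∑ j, Real.exp (y j)) := by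
      ring
    rw [this]
    have h3 : (1:ℝ) / Real.exp δ ≤ (∑ j, Real.exp (x j)) / ∑ j, Real.exp (y j) := by
      rw [div_le_div_iff₀ hed hYpos]
      linarith
    calc Real.exp (x i) ≤ Real.exp δ * Real.exp (y i) := h1
      _ = Real.exp (2*δ) * Real.exp (y i) * (1 / Real.exp δ) := by
          rw [two_mul, Real.exp_add]; field_simp
      _ ≤ _ := by
          apply mul_le_mul_of_nonneg_left h3
          positivity
  have hpq : ∀ i, p i ≤ Real.exp (2*δ) * q i := key z zhat h
  have hqp : ∀ i, q i ≤ Real.exp (2*δ) * p i := by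
    apply key zhat z
    intro i; rw [abs_sub_comm]; exact h i
  have he1 : (1:ℝ) ≤ Real.exp (2*δ) := by
    rw [← Real.exp_zero]; exact Real.exp_le_exp.2 (by linarith)
  have hbound : ∀ i ∈ Finset.univ, |p i - q i| ≤ (Real.exp (2*δ) - 1) * (p i + q i) := by
    intro i _
    rw [abs_sub_le_iff]
    constructor
    · nlinarith [hpq i, hpnn i, hqnn i]
    · nlinarith [hqp i, hpnn i, hqnn i]
  calc (∑ i, |p i - q i|) ≤ ∑ i, (Real.exp (2*δ) - 1) * (p i + q i) :=
        Finset.sum_le_sum hbound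
    _ = (Real.exp (2*δ) - 1) * ((∑ i, p i) + (∑ i, q i)) := by
        rw [← Finset.mul_sum, Finset.sum_add_distrib]
    _ = 2 * (Real.exp (2*δ) - 1) := by rw [hsum_p, hsum_q]; ring
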